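/- arXiv:2312.03732 — 3 statements merged into one kernel-verified Lean document; each statement's English description precedes it below -/
import Mathlib

section
/- Under SGD on the LoRA adapter with B_0 = 0 and update rules B_{n+1} = B_n − ηγ v_n x_nᵀ A_nᵀ, A_{n+1} = A_n − ηγ B_nᵀ v_n x_nᵀ, for every n ≥ 1 there exist matrices C_n and D_n (polynomials in the data with bounded norm independent of γ) such that B_n = (−ηγ Σ_{k<n} v_k x_kᵀ + γ² C_n) A_0ᵀ and A_n = A_0 + γ² D_n. -/
/-!
Write `Bₙ = (-ηγ Sₙ + γ² Cₙ) A₀ᵀ` and `Aₙ = A₀ + γ² A₀ Eₙ` with `Sₙ = ∑_{k<n} vₖ xₖᵀ`.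
Substituting these shapes into the SGD recursion produces a recursion for `(Cₙ, Eₙ)` that is
polynomial in `γ`, so `Cₙ` and `Dₙ = A₀ Eₙ` depend continuously on `γ` and are bounded on the
compact set `|γ| ≤ 1`.
-/

open Matrix Finset

namespace LoRA

variable {R ι κ : Type*} [CommRing R] [Fintype ι] [Fintype κ]

/-- `(Cₙ, Eₙ)`, where `M k` plays the role of `vₖ xₖᵀ`. -/
def correction (η γ : R) (M : ℕ → Matrix ι κ R) : ℕ → Matrix ι κ R × Matrix κ κ R
  | 0 => (0, 0)
  | n + 1 =>
      ((correction η γ M n).1 - (η * γ) • (M n * (correction η γ M n).2ᵀ),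
       (correction η γ M n).2 + η ^ 2 • ((∑ k ∈ range n, M k)ᵀ * M n)
         - (η * γ) • ((correction η γ M n).1ᵀ * M n))

theorem iterates_eq_correction {ρ : Type*} [Fintype ρ] (η γ : R) (M : ℕ → Matrix ι κ R)
    (A₀ : Matrix ρ κ R) (B : ℕ → Matrix ι ρ R) (A : ℕ → Matrix ρ κ R)
    (hB0 : B 0 = 0) (hA0 : A 0 = A₀)
    (hBrec : ∀ n, B (n + 1) = B n - (η * γ) • (M n * (A n)ᵀ))
    (hArec : ∀ n, A (n + 1) = A n - (η * γ) • ((B n)ᵀ * M n)) (n : ℕ) :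
    B n = (-(η * γ)) • (∑ k ∈ range n, M k) * A₀ᵀ + γ ^ 2 • ((correction η γ M n).1 * A₀ᵀ) ∧
      A n = A₀ + γ ^ 2 • (A₀ * (correction η γ M n).2) := by
  induction n with
  | zero => simp [hB0, hA0, correction]
  | succ n ih =>
    obtain ⟨ihB, ihA⟩ := ih
    constructor
    · rw [hBrec, ihB, ihA, correction]
      simp only [sum_range_succ, transpose_add, transpose_smul, transpose_mul,
        Matrix.mul_add, Matrix.add_mul, Matrix.sub_mul, Matrix.mul_smul, Matrix.smul_mul,
        Matrix.mul_assoc, smul_add, smul_sub, smul_smul, neg_smul, Matrix.neg_mul]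
      module
    · rw [hArec, ihB, ihA, correction]
      simp only [transpose_add, transpose_smul, transpose_mul, transpose_transpose,
        transpose_neg, Matrix.mul_add, Matrix.add_mul, Matrix.mul_sub, Matrix.mul_smul,
        Matrix.smul_mul, Matrix.mul_assoc, smul_add, smul_sub, smul_smul, neg_smul,
        Matrix.neg_mul]
      module

theorem continuous_correction (η : ℝ) (M : ℕ → Matrix ι κ ℝ) (n : ℕ) :
    Continuous fun γ => correction η γ M n := by
  induction n with
  | zero => exact continuous_const
  | succ n ih =>
    simp only [correction]
    fun_prop

end LoRA

section EntryBound

attribute [local instance] Matrix.normedAddCommGroup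

theorem Matrix.exists_abs_entry_le_of_continuousOn {X ι κ : Type*} [TopologicalSpace X]
    [Fintype ι] [Fintype κ] {f : X → Matrix ι κ ℝ} {s : Set X} (hs : IsCompact s)
    (hf : ContinuousOn f s) : ∃ K, ∀ y ∈ s, ∀ i j, |f y i j| ≤ K := by
  obtain ⟨K, hK⟩ := hs.exists_bound_of_continuousOn hf
  exact ⟨K, fun y hy i j => (norm_entry_le_entrywise_sup_norm (f y)).trans (hK y hy)⟩

end EntryBound

theorem stmt_5_general {d₁ d₂ r : ℕ}
    (η : ℝ) (v : ℕ → Fin d₁ → ℝ) (x : ℕ → Fin d₂ → ℝ)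
    (A₀ : Matrix (Fin r) (Fin d₂) ℝ)
    (B : ℝ → ℕ → Matrix (Fin d₁) (Fin r) ℝ)
    (A : ℝ → ℕ → Matrix (Fin r) (Fin d₂) ℝ)
    (hB0 : ∀ γ : ℝ, B γ 0 = 0) (hA0 : ∀ γ : ℝ, A γ 0 = A₀)
    (hBrec : ∀ γ : ℝ, ∀ n : ℕ,
      B γ (n + 1) = B γ n - (η * γ) • (vecMulVec (v n) (x n) * (A γ n)ᵀ))
    (hArec : ∀ γ : ℝ, ∀ n : ℕ,
      A γ (n + 1) = A γ n - (η * γ) • ((B γ n)ᵀ * vecMulVec (v n) (x n)))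
    (n : ℕ) :
    ∃ K : ℝ, ∀ γ : ℝ, |γ| ≤ 1 →
      ∃ (C : Matrix (Fin d₁) (Fin d₂) ℝ) (D : Matrix (Fin r) (Fin d₂) ℝ),
        B γ n = ((-(η * γ)) • (∑ k ∈ range n, vecMulVec (v k) (x k)) * A₀ᵀ
                  + γ ^ 2 • (C * A₀ᵀ)) ∧
        A γ n = A₀ + γ ^ 2 • D ∧
        (∀ i j, |C i j| ≤ K) ∧ (∀ i j, |D i j| ≤ K) := by
  set M : ℕ → Matrix (Fin d₁) (Fin d₂) ℝ := fun k => vecMulVec (v k) (x k)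
  have hcont := LoRA.continuous_correction η M n
  have hI : IsCompact (Set.Icc (-1 : ℝ) 1) := isCompact_Icc
  obtain ⟨K₁, hC⟩ := exists_abs_entry_le_of_continuousOn hI hcont.fst.continuousOn
  obtain ⟨K₂, hD⟩ := exists_abs_entry_le_of_continuousOn hI
    (continuous_const.matrix_mul hcont.snd (A := fun _ => A₀)).continuousOn
  refine ⟨max K₁ K₂, fun γ hγ => ?_⟩
  have hγ' : γ ∈ Set.Icc (-1) 1 := abs_le.mp hγ
  obtain ⟨hBn, hAn⟩ := LoRA.iterates_eq_correction η γ M A₀ (B γ) (A γ) (hB0 γ) (hA0 γ)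
    (hBrec γ) (hArec γ) n
  exact ⟨_, _, hBn, hAn, fun i j => (hC γ hγ' i j).trans (le_max_left _ _),
    fun i j => (hD γ hγ' i j).trans (le_max_right _ _)⟩

/-- Under LoRA SGD with B₀ = 0, for every n ≥ 1 there exist matrices
    Cₙ, Dₙ with norm bounded independently of γ such that
    Bₙ = (−ηγ Σ_{k<n} vₖxₖᵀ + γ² Cₙ) A₀ᵀ and Aₙ = A₀ + γ² Dₙ. -/
theorem stmt_5 {d₁ d₂ r : ℕ}
    (η : ℝ) (v : ℕ → Fin d₁ → ℝ) (x : ℕ → Fin d₂ → ℝ)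
    (A₀ : Matrix (Fin r) (Fin d₂) ℝ)
    (B : ℝ → ℕ → Matrix (Fin d₁) (Fin r) ℝ)
    (A : ℝ → ℕ → Matrix (Fin r) (Fin d₂) ℝ)
    (hB0 : ∀ γ : ℝ, B γ 0 = 0) (hA0 : ∀ γ : ℝ, A γ 0 = A₀)
    (hBrec : ∀ γ : ℝ, ∀ n : ℕ,
      B γ (n + 1) = B γ n - (η * γ) • (vecMulVec (v n) (x n) * (A γ n)ᵀ))
    (hArec : ∀ γ : ℝ, ∀ n : ℕ,
      A γ (n + 1) = A γ n - (η * γ) • ((B γ n)ᵀ * vecMulVec (v n) (x n)))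
    (n : ℕ) (hn : 1 ≤ n) :
    ∃ K : ℝ, ∀ γ : ℝ, |γ| ≤ 1 →
      ∃ (C : Matrix (Fin d₁) (Fin d₂) ℝ) (D : Matrix (Fin r) (Fin d₂) ℝ),
        B γ n = ((-(η * γ)) • (∑ k ∈ range n, vecMulVec (v k) (x k)) * A₀ᵀ
                  + γ ^ 2 • (C * A₀ᵀ)) ∧
        A γ n = A₀ + γ ^ 2 • D ∧
        (∀ i j, |C i j| ≤ K) ∧ (∀ i j, |D i j| ≤ K) :=
  stmt_5_general η v x A₀ B A hB0 hA0 hBrec hArec n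
end

section
/- Suppose f(r) = c·(γ_r² r)^m + e(r) with c ≠ 0, m ≥ 1, |e(r)| ≤ C·(γ_r³ r)^m, and γ_r → 0. Then f(r) ∈ Θ_r(1) if and only if γ_r ∈ Θ_r(1/√r). -/
open Filter Asymptotics

/-- If f(r) = c·(γ_r² r)^m + e(r) with c ≠ 0, m ≥ 1,
    |e(r)| ≤ C·(γ_r³ r)^m and γ_r → 0, then f ∈ Θ(1) iff γ ∈ Θ(1/√r). -/
theorem stmt_9 (γ : ℕ → ℝ) (hγ : ∀ r, 0 < γ r)
    (hγ0 : Tendsto γ atTop (nhds 0))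
    (c : ℝ) (hc : c ≠ 0) (m : ℕ) (hm : 1 ≤ m) (C : ℝ) (hC : 0 < C)
    (f e : ℕ → ℝ)
    (hf : ∀ r : ℕ, f r = c * ((γ r) ^ 2 * (r : ℝ)) ^ m + e r)
    (he : ∀ r : ℕ, |e r| ≤ C * ((γ r) ^ 3 * (r : ℝ)) ^ m) :
    f =Θ[atTop] (fun _ : ℕ => (1 : ℝ)) ↔
      γ =Θ[atTop] (fun r : ℕ => 1 / Real.sqrt r) := by
  set x : ℕ → ℝ := fun r => γ r ^ 2 * r with hxdef
  have hx0 : ∀ r, 0 ≤ x r := fun r => mul_nonneg (sq_nonneg _) (Nat.cast_nonneg r)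
  have hcpos : 0 < |c| := abs_pos.mpr hc
  -- eventually the error term is at most (|c|/2) x^m
  have hev : ∀ᶠ r in atTop, C * γ r ^ m ≤ |c| / 2 := by
    have h1 : Tendsto (fun r => C * γ r ^ m) atTop (nhds 0) := by
      simpa [zero_pow (Nat.one_le_iff_ne_zero.mp hm)] using ((hγ0.pow m).const_mul C)
    exact h1.eventually_le_const (by positivity)
  have key : ∀ᶠ r in atTop, |c| / 2 * x r ^ m ≤ |f r| ∧ |f r| ≤ 3 * |c| / 2 * x r ^ m := by
    filter_upwards [hev] with r hr
    have hxm : (0:ℝ) ≤ x r ^ m := pow_nonneg (hx0 r) m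
    have he' : |e r| ≤ |c| / 2 * x r ^ m := by
      calc |e r| ≤ C * (γ r ^ 3 * r) ^ m := he r
        _ = (C * γ r ^ m) * x r ^ m := by
            rw [show γ r ^ 3 * (r:ℝ) = γ r * (γ r ^ 2 * r) by ring, mul_pow, hxdef]; ring
        _ ≤ |c| / 2 * x r ^ m := mul_le_mul_of_nonneg_right hr hxm
    have habs : |c * x r ^ m| = |c| * x r ^ m := by
      rw [abs_mul, abs_of_nonneg hxm]
    constructor
    · have h2 : |c * x r ^ m| - |e r| ≤ |f r| := by
        have := abs_sub_abs_le_abs_sub (c * x r ^ m) (-e r)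
        simpa [hf r, sub_neg_eq_add] using this
      rw [habs] at h2; linarith
    · have h2 : |f r| ≤ |c * x r ^ m| + |e r| := by
        rw [hf r]; exact abs_add_le _ _
      rw [habs] at h2; linarith
  have hsq : ∀ r : ℕ, 1 ≤ r → γ r * Real.sqrt r = Real.sqrt (x r) := by
    intro r hr
    rw [hxdef]
    rw [Real.sqrt_mul (sq_nonneg _), Real.sqrt_sq (hγ r).le]
  constructor
  · rintro ⟨hO, hO'⟩
    obtain ⟨K, hK⟩ := isBigO_iff.mp hO
    obtain ⟨K', hK'⟩ := isBigO_iff.mp hO'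
    simp only [norm_one, mul_one, Real.norm_eq_abs] at hK hK'
    -- K' > 0
    have hK'pos : 0 < K' := by
      obtain ⟨r, hr⟩ := hK'.exists
      nlinarith [abs_nonneg (f r), abs_nonneg (1:ℝ)]
    set A : ℝ := 2 / (3 * |c| * K') with hA
    set B : ℝ := 2 * K / |c| with hB
    have hApos : 0 < A := by positivity
    have hbound : ∀ᶠ r in atTop, min 1 A ≤ x r ∧ x r ≤ max 1 B := by
      filter_upwards [key, hK, hK'] with r ⟨h1, h2⟩ hk hk'
      have h1' : (1:ℝ) ≤ K' * |f r| := hk'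
      have hxmA : A ≤ x r ^ m := by
        have : 1 / K' ≤ |f r| := by
          rw [div_le_iff₀ hK'pos] at *; linarith [mul_comm K' (|f r|)]
        rw [hA, div_le_iff₀ (by positivity)]
        nlinarith
      have hxmB : x r ^ m ≤ B := by
        rw [hB, le_div_iff₀ hcpos]
        nlinarith
      constructor
      · rcases le_or_gt 1 (x r) with h | h
        · exact le_trans (min_le_left _ _) h
        · refine le_trans (min_le_right _ _) (le_trans hxmA ?_)
          calc x r ^ m ≤ x r ^ 1 := pow_le_pow_of_le_one (hx0 r) h.le hm
            _ = x r := pow_one _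
      · rcases le_or_gt (x r) 1 with h | h
        · exact le_trans h (le_max_left _ _)
        · refine le_trans ?_ (le_max_right _ _)
          refine le_trans ?_ hxmB
          calc x r = x r ^ 1 := (pow_one _).symm
            _ ≤ x r ^ m := pow_le_pow_right₀ h.le hm
      done
    have hminpos : 0 < min 1 A := lt_min one_pos hApos
    constructor
    · rw [isBigO_iff]
      refine ⟨Real.sqrt (max 1 B), ?_⟩
      filter_upwards [hbound, eventually_ge_atTop 1] with r ⟨hl, hu⟩ hr1
      have hrpos : (0:ℝ) < Real.sqrt r := Real.sqrt_pos.mpr (by exact_mod_cast hr1)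
      have : γ r * Real.sqrt r ≤ Real.sqrt (max 1 B) := by
        rw [hsq r hr1]; exact Real.sqrt_le_sqrt hu
      rw [Real.norm_eq_abs, Real.norm_eq_abs, abs_of_pos (hγ r),
        abs_of_pos (by positivity : (0:ℝ) < 1 / Real.sqrt r)]
      rw [mul_one_div, le_div_iff₀ hrpos]
      exact this
    · rw [isBigO_iff]
      refine ⟨1 / Real.sqrt (min 1 A), ?_⟩
      filter_upwards [hbound, eventually_ge_atTop 1] with r ⟨hl, hu⟩ hr1
      have hrpos : (0:ℝ) < Real.sqrt r := Real.sqrt_pos.mpr (by exact_mod_cast hr1)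
      have hmsq : 0 < Real.sqrt (min 1 A) := Real.sqrt_pos.mpr hminpos
      have h2 : Real.sqrt (min 1 A) ≤ γ r * Real.sqrt r := by
        rw [hsq r hr1]; exact Real.sqrt_le_sqrt hl
      rw [Real.norm_eq_abs, Real.norm_eq_abs, abs_of_pos (hγ r),
        abs_of_pos (by positivity : (0:ℝ) < 1 / Real.sqrt r)]
      rw [one_div, div_mul_eq_mul_div, le_div_iff₀ hmsq, inv_mul_eq_div,
        div_le_iff₀ hrpos]
      linarith
  · rintro ⟨hO, hO'⟩
    obtain ⟨k, hk⟩ := isBigO_iff.mp hO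
    obtain ⟨k', hk'⟩ := isBigO_iff.mp hO'
    simp only [Real.norm_eq_abs] at hk hk'
    -- k' > 0
    have hk'pos : 0 < k' := by
      obtain ⟨r, hr, hr1⟩ := (hk'.and (eventually_ge_atTop 1)).exists
      have hrpos : (0:ℝ) < Real.sqrt r := Real.sqrt_pos.mpr (by exact_mod_cast hr1)
      have h1 : 0 < |1 / Real.sqrt r| := abs_pos.mpr (by positivity)
      nlinarith [abs_nonneg (γ r)]
    have hbound : ∀ᶠ r in atTop, (1 / k' ^ 2) ^ m ≤ x r ^ m ∧ x r ^ m ≤ (k ^ 2) ^ m := by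
      filter_upwards [hk, hk', eventually_ge_atTop 1] with r h1 h2 hr1
      have hrpos : (0:ℝ) < Real.sqrt r := Real.sqrt_pos.mpr (by exact_mod_cast hr1)
      have hxr : x r = (γ r * Real.sqrt r) ^ 2 := by
        rw [hxdef, mul_pow, Real.sq_sqrt (Nat.cast_nonneg r)]
      have hg1 : |γ r| = γ r := abs_of_pos (hγ r)
      have habs1 : |1 / Real.sqrt r| = 1 / Real.sqrt r := abs_of_pos (by positivity)
      rw [hg1, habs1] at h1 h2
      have hupper : γ r * Real.sqrt r ≤ k := by
        rw [mul_one_div] at h1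
        rw [← le_div_iff₀ hrpos] at *
        linarith
      have hlower : 1 / k' ≤ γ r * Real.sqrt r := by
        rw [div_le_iff₀ hk'pos]
        calc 1 = (1 / Real.sqrt r) * Real.sqrt r := by field_simp
          _ ≤ (k' * γ r) * Real.sqrt r := by
              exact mul_le_mul_of_nonneg_right h2 hrpos.le
          _ = γ r * Real.sqrt r * k' := by ring
      have hgs : 0 ≤ γ r * Real.sqrt r := mul_nonneg (hγ r).le hrpos.le
      constructor
      · apply pow_le_pow_left₀ (by positivity)
        rw [hxr]
        have h5 : (1 / k') ^ 2 ≤ (γ r * Real.sqrt r) ^ 2 :=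
          pow_le_pow_left₀ (by positivity) hlower 2
        simpa [div_pow] using h5
      · apply pow_le_pow_left₀ (hx0 r)
        rw [hxr]
        exact pow_le_pow_left₀ hgs hupper 2
    constructor
    · rw [isBigO_iff]
      refine ⟨3 * |c| / 2 * (k ^ 2) ^ m, ?_⟩
      filter_upwards [key, hbound] with r ⟨h1, h2⟩ ⟨h3, h4⟩
      simp only [norm_one, mul_one, Real.norm_eq_abs]
      calc |f r| ≤ 3 * |c| / 2 * x r ^ m := h2
        _ ≤ 3 * |c| / 2 * (k ^ 2) ^ m := by
            apply mul_le_mul_of_nonneg_left h4 (by positivity)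
    · rw [isBigO_iff]
      refine ⟨2 / (|c| * (1 / k' ^ 2) ^ m), ?_⟩
      filter_upwards [key, hbound] with r ⟨h1, h2⟩ ⟨h3, h4⟩
      simp only [norm_one, Real.norm_eq_abs]
      have hApos : (0:ℝ) < (1 / k' ^ 2) ^ m := by positivity
      rw [div_mul_eq_mul_div, le_div_iff₀ (by positivity)]
      calc (1:ℝ) * (|c| * (1 / k' ^ 2) ^ m) = 2 * (|c| / 2 * (1 / k' ^ 2) ^ m) := by ring
        _ ≤ 2 * (|c| / 2 * x r ^ m) := by
            apply mul_le_mul_of_nonneg_left _ (by norm_num)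
            exact mul_le_mul_of_nonneg_left h3 (by positivity)
        _ ≤ 2 * |f r| := by linarith
end

section
/- Let M_r = c·γ_r² r·S + E_r where S ≠ 0 is fixed, ‖E_r‖_∞ ≤ K γ_r³ r, c ≠ 0, γ_r > 0 with γ_r → 0. If γ_r ∉ Θ(1/√r) then either some subsequence of entries of M_r tends to 0 on every nonzero entry of S (collapse) or is unbounded (instability); i.e., M_r's entries fail to be Θ_r(1). -/
/-!
The entry `M r i j` is `c S i j · γ_r² r` plus an error `O(K γ_r · γ_r² r) = o(γ_r² r)`, so it is
`Θ(γ_r² r)`. Were it `Θ(1)`, then `γ_r² r = Θ(1)`, i.e. `γ_r = Θ(1/√r)`.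
-/

open Filter Matrix Asymptotics

theorem Asymptotics.IsTheta.of_pow {α 𝕜 𝕜' : Type*} [NormedDivisionRing 𝕜] [NormedDivisionRing 𝕜']
    {l : Filter α} {f : α → 𝕜} {g : α → 𝕜'} {n : ℕ} (hn : n ≠ 0) (h : (f ^ n) =Θ[l] (g ^ n)) :
    f =Θ[l] g :=
  ⟨h.1.of_pow hn, h.2.of_pow hn⟩

theorem Asymptotics.IsBigO.isLittleO_of_tendsto_zero {α : Type*} {l : Filter α}
    {e ε g : α → ℝ} (he : e =O[l] fun x ↦ ε x * g x) (hε : Tendsto ε l (nhds 0)) : e =o[l] g := by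
  simpa using he.trans_isLittleO ((isLittleO_one_iff ℝ).2 hε |>.mul_isBigO (isBigO_refl g l))

theorem isTheta_const_mul_add_of_isLittleO {α : Type*} {l : Filter α} {a : ℝ} (ha : a ≠ 0)
    {g e : α → ℝ} (he : e =o[l] g) : (fun x ↦ a * g x + e x) =Θ[l] g :=
  ((isTheta_const_mul_left ha).2 (isTheta_refl g l)).add_isLittleO he

theorem isTheta_one_div_sqrt_of_sq_mul_isTheta_one {γ : ℕ → ℝ}
    (h : (fun r : ℕ ↦ γ r ^ 2 * r) =Θ[atTop] fun _ ↦ (1 : ℝ)) :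
    γ =Θ[atTop] fun r : ℕ ↦ 1 / Real.sqrt r := by
  have hsq : (γ ^ 2) =Θ[atTop] ((fun r : ℕ ↦ 1 / Real.sqrt r) ^ 2) := by
    have hdiv := h.mul (isTheta_refl (fun r : ℕ ↦ 1 / (r : ℝ)) atTop)
    refine EventuallyEq.trans_isTheta ?_ (hdiv.trans_eventuallyEq ?_)
    · filter_upwards [eventually_ne_atTop 0] with r hr
      simp [hr]
    · filter_upwards with r
      simp
  exact hsq.of_pow two_ne_zero

theorem stmt_19_general {d₁ d₂ : ℕ}
    (γ : ℕ → ℝ) (hγ0 : Tendsto γ atTop (nhds 0))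
    (c : ℝ) (hc : c ≠ 0) (K : ℝ)
    (S : Matrix (Fin d₁) (Fin d₂) ℝ)
    (M E : ℕ → Matrix (Fin d₁) (Fin d₂) ℝ)
    (hM : ∀ r : ℕ, M r = (c * (γ r) ^ 2 * r) • S + E r)
    (hE : ∀ r : ℕ, ∀ i j, |E r i j| ≤ K * (γ r) ^ 3 * r)
    (hnot : ¬ γ =Θ[atTop] (fun r : ℕ => 1 / Real.sqrt r)) :
    ∀ i j, S i j ≠ 0 →
      ¬ (fun r : ℕ => M r i j) =Θ[atTop] (fun _ : ℕ => (1 : ℝ)) := by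
  intro i j hSij hMij
  have hentry : (fun r : ℕ ↦ M r i j) = fun r ↦ c * S i j * (γ r ^ 2 * r) + E r i j := by
    ext r
    rw [hM, Matrix.add_apply, Matrix.smul_apply, smul_eq_mul]
    ring
  have hE_bigO : (fun r ↦ E r i j) =O[atTop] fun r ↦ K * γ r * (γ r ^ 2 * r) :=
    isBigO_of_le _ fun r ↦ ((hE r i j).trans_eq (by ring)).trans (le_abs_self _)
  have hE_littleO := hE_bigO.isLittleO_of_tendsto_zero (by simpa using hγ0.const_mul K)
  have hentry_isTheta := isTheta_const_mul_add_of_isLittleO (mul_ne_zero hc hSij) hE_littleO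
  exact hnot (isTheta_one_div_sqrt_of_sq_mul_isTheta_one
    (hentry_isTheta.symm.trans (hentry ▸ hMij)))

/-- If M_r = c γ_r² r S + E_r with S ≠ 0, ‖E_r‖_∞ ≤ K γ_r³ r, c ≠ 0,
    γ_r > 0, γ_r → 0, and γ ∉ Θ(1/√r), then the entries of M_r at nonzero entries
    of S fail to be Θ_r(1) (they collapse or are unbounded). -/
theorem stmt_19 {d₁ d₂ : ℕ}
    (γ : ℕ → ℝ) (hγ : ∀ r, 0 < γ r) (hγ0 : Tendsto γ atTop (nhds 0))
    (c : ℝ) (hc : c ≠ 0) (K : ℝ) (hK : 0 < K)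
    (S : Matrix (Fin d₁) (Fin d₂) ℝ) (hS : S ≠ 0)
    (M E : ℕ → Matrix (Fin d₁) (Fin d₂) ℝ)
    (hM : ∀ r : ℕ, M r = (c * (γ r) ^ 2 * r) • S + E r)
    (hE : ∀ r : ℕ, ∀ i j, |E r i j| ≤ K * (γ r) ^ 3 * r)
    (hnot : ¬ γ =Θ[atTop] (fun r : ℕ => 1 / Real.sqrt r)) :
    ∀ i j, S i j ≠ 0 →
      ¬ (fun r : ℕ => M r i j) =Θ[atTop] (fun _ : ℕ => (1 : ℝ)) :=
  stmt_19_general γ hγ0 c hc K S M E hM hE hnot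
end
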